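/- For all natural numbers n, the sum over k from 0 to n of C(n,k)^2 * C(2n+k, k) * (H_k - H_{n-k}) equals C(2n,n)^2 * (H_{2n} - H_n). -/

import Mathlib

/-!
Write `w k = C(n,k)² C(2n+k,k)` and consider `G(x) = ∑ₖ C(2n+k,k) C(x,k) C(2n-x,n-k)`, so that
`G(n) = ∑ₖ w k`. Vandermonde's identity gives `∑ₖ C(x+y+k,k) C(x,k) C(y,n-k) = C(x+y,n) C(x+n,n)`
for all natural `x, y`; with `y = 2n - x` it says `G(x) = C(2n,n) C(x+n,n)` at the `2n + 1`
points `x = 0, …, 2n`, hence identically, both sides having degree `n`. Differentiate at `x = n`: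
at natural `N ≥ k` the logarithmic derivative of `C(x,k)` is `H_N - H_{N-k}`, so the left side
gives `∑ₖ w k ((H_n - H_{n-k}) - (H_n - H_k))` and the right side `C(2n,n)² (H_{2n} - H_n)`.
-/

open Finset

def harmonicQ (m : Nat) : ℚ := ∑ j ∈ Finset.range m, (1 : ℚ) / (j + 1)

open Polynomial

namespace Nat

theorem add_choose_eq_sum_range (a b c : ℕ) :
    (a + b).choose c = ∑ i ∈ range (c + 1), a.choose i * b.choose (c - i) := by
  rw [add_choose_eq, Finset.Nat.sum_antidiagonal_eq_sum_range_succ_mk]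

theorem sum_range_choose_mul_choose_eq (a b N : ℕ) (h : a ≤ N) :
    ∑ j ∈ range (N + 1), a.choose j * b.choose j = (a + b).choose a := by
  rw [add_comm a b, add_choose_eq_sum_range]
  symm
  refine sum_subset_zero_on_sdiff (range_subset_range.2 (by omega)) ?_ ?_
  · intro j hj
    rw [mem_sdiff, mem_range, mem_range] at hj
    rw [choose_eq_zero_of_lt (by omega : a < j), zero_mul]
  · intro j hj
    rw [choose_symm (mem_range_succ_iff.1 hj), mul_comm]

theorem sum_range_choose_mul_choose_mul_choose (x y n j : ℕ) (hj : j ≤ n) :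
    ∑ k ∈ range (n + 1), x.choose k * k.choose j * y.choose (n - k)
      = x.choose j * (x - j + y).choose (n - j) := by
  rw [← sum_range_add_sum_Ico _ (by omega : j ≤ n + 1),
    sum_eq_zero fun k hk => by rw [choose_eq_zero_of_lt (mem_range.1 hk), mul_zero, zero_mul],
    zero_add, sum_Ico_eq_sum_range, show n + 1 - j = n - j + 1 by omega, add_choose_eq_sum_range,
    mul_sum]
  refine sum_congr rfl fun t ht => ?_
  rw [choose_mul (le_add_right j t), add_tsub_cancel_left, show n - (j + t) = n - j - t by omega,
    mul_assoc]

theorem sum_range_add_choose_mul_choose_mul_choose (x y n : ℕ) :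
    ∑ k ∈ range (n + 1), (x + y + k).choose k * x.choose k * y.choose (n - k)
      = (x + y).choose n * (x + n).choose n := by
  have expand : ∀ k ∈ range (n + 1),
      (x + y + k).choose k * x.choose k * y.choose (n - k)
        = ∑ j ∈ range (n + 1),
            (x + y).choose j * (x.choose k * k.choose j * y.choose (n - k)) := by
    intro k hk
    rw [add_comm (x + y), ← sum_range_choose_mul_choose_eq k (x + y) n (mem_range_succ_iff.1 hk),
      sum_mul, sum_mul]
    exact sum_congr rfl fun j _ => by ring
  have collapse : ∀ j ∈ range (n + 1),
      (x + y).choose j * (x.choose j * (x - j + y).choose (n - j))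
        = (x + y).choose n * (n.choose j * x.choose j) := by
    intro j hj
    rcases le_or_gt j x with hjx | hxj
    · rw [show x - j + y = x + y - j by omega, mul_left_comm,
        ← choose_mul (mem_range_succ_iff.1 hj)]
      ring
    · simp [choose_eq_zero_of_lt hxj]
  rw [sum_congr rfl expand, sum_comm]
  simp_rw [← mul_sum]
  rw [sum_congr rfl fun j hj => by
      rw [sum_range_choose_mul_choose_mul_choose x y n j (mem_range_succ_iff.1 hj)],
    sum_congr rfl collapse, ← mul_sum,
    sum_range_choose_mul_choose_eq n x n le_rfl, add_comm n x]

end Nat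

theorem harmonicQ_succ (m : ℕ) : harmonicQ (m + 1) = harmonicQ m + 1 / (m + 1) :=
  sum_range_succ _ _

theorem eval_natCast_derivative_descPochhammer {m N : ℕ} (h : m ≤ N) :
    (derivative (descPochhammer ℚ m)).eval (N : ℚ)
      = N.descFactorial m * (harmonicQ N - harmonicQ (N - m)) := by
  induction m with
  | zero => simp
  | succ m ih =>
    obtain ⟨t, rfl⟩ : ∃ t, N = m + 1 + t := ⟨N - (m + 1), by omega⟩
    rw [descPochhammer_succ_right, derivative_mul, eval_add, eval_mul, eval_mul, ih (by omega),
      descPochhammer_eval_eq_descFactorial, Nat.descFactorial_succ,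
      show m + 1 + t - m = t + 1 by omega, show m + 1 + t - (m + 1) = t by omega, harmonicQ_succ]
    simp only [derivative_sub, derivative_X, derivative_natCast, sub_zero, eval_sub, eval_X,
      eval_natCast, eval_one, Nat.cast_mul, Nat.cast_add, Nat.cast_one]
    field_simp
    ring

noncomputable def binomPoly (m : ℕ) : ℚ[X] := C (m.factorial : ℚ)⁻¹ * descPochhammer ℚ m

theorem eval_natCast_binomPoly (m N : ℕ) : (binomPoly m).eval (N : ℚ) = N.choose m := by
  rw [binomPoly, eval_mul, eval_C, Nat.cast_choose_eq_descPochhammer_div, inv_mul_eq_div]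

theorem natDegree_binomPoly_le (m : ℕ) : (binomPoly m).natDegree ≤ m :=
  (natDegree_C_mul_le _ _).trans (descPochhammer_natDegree ℚ m).le

theorem eval_natCast_derivative_binomPoly {m N : ℕ} (h : m ≤ N) :
    (derivative (binomPoly m)).eval (N : ℚ) = N.choose m * (harmonicQ N - harmonicQ (N - m)) := by
  rw [binomPoly, derivative_C_mul, eval_mul, eval_C, eval_natCast_derivative_descPochhammer h,
    Nat.descFactorial_eq_factorial_mul_choose, Nat.cast_mul, ← mul_assoc, inv_mul_cancel_left₀]
  exact_mod_cast m.factorial_ne_zero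

theorem sum_binomPoly_mul_binomPoly_comp_eq {m n : ℕ} (h : n ≤ m) :
    ∑ k ∈ range (n + 1),
        C ((m + k).choose k : ℚ) * (binomPoly k * (binomPoly (n - k)).comp (C (m : ℚ) - X))
      = C (m.choose n : ℚ) * (binomPoly n).comp (X + C (n : ℚ)) := by
  refine eq_of_natDegree_lt_card_of_eval_eq _ _ (f := fun i : Fin (m + 1) => ((i : ℕ) : ℚ))
    (Nat.cast_injective.comp Fin.val_injective) (fun ⟨x, hx⟩ => ?_) ?_
  · have hy : (m : ℚ) - x = ((m - x : ℕ) : ℚ) := by rw [Nat.cast_sub (by omega)]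
    have := Nat.sum_range_add_choose_mul_choose_mul_choose x (m - x) n
    rw [show x + (m - x) = m by omega] at this
    simp only [eval_finsetSum, eval_mul, eval_C, eval_comp, eval_sub, eval_add, eval_X, hy,
      eval_natCast_binomPoly, ← Nat.cast_add, ← mul_assoc]
    exact_mod_cast this
  · have hsub : (C (m : ℚ) - X).natDegree ≤ 1 :=
      (natDegree_sub_le _ _).trans (by simp)
    refine (max_le (natDegree_sum_le_of_forall_le _ _ fun k hk => ?_) ?_).trans_lt
      (show n < Fintype.card (Fin (m + 1)) by rw [Fintype.card_fin]; omega)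
    · calc _ ≤ (binomPoly k * (binomPoly (n - k)).comp (C (m : ℚ) - X)).natDegree :=
            natDegree_C_mul_le _ _
        _ ≤ k + (n - k) * 1 := natDegree_mul_le.trans (add_le_add (natDegree_binomPoly_le k)
            (natDegree_comp_le.trans (Nat.mul_le_mul (natDegree_binomPoly_le _) hsub)))
        _ ≤ n := by have := mem_range_succ_iff.1 hk; omega
    · calc _ ≤ ((binomPoly n).comp (X + C (n : ℚ))).natDegree := natDegree_C_mul_le _ _
        _ ≤ n * 1 := natDegree_comp_le.trans
            (Nat.mul_le_mul (natDegree_binomPoly_le _) (natDegree_X_add_C _).le)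
        _ = n := mul_one n

theorem eval_natCast_derivative_binomPoly_mul_binomPoly_comp {k j x m : ℕ} (hk : k ≤ x)
    (hj : j ≤ m - x) (hx : x ≤ m) :
    (derivative (binomPoly k * (binomPoly j).comp (C (m : ℚ) - X))).eval (x : ℚ)
      = x.choose k * (m - x).choose j
          * ((harmonicQ x - harmonicQ (x - k)) - (harmonicQ (m - x) - harmonicQ (m - x - j))) := by
  have hy : (m : ℚ) - x = ((m - x : ℕ) : ℚ) := by rw [Nat.cast_sub hx]
  simp only [derivative_mul, derivative_comp, derivative_sub, derivative_C, derivative_X, eval_add,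
    eval_mul, eval_comp, eval_sub, eval_C, eval_X, eval_neg, eval_one, zero_sub, hy,
    eval_natCast_binomPoly, eval_natCast_derivative_binomPoly hk,
    eval_natCast_derivative_binomPoly hj]
  ring

theorem eval_natCast_derivative_binomPoly_comp_X_add_C {m N a : ℕ} (h : m ≤ N + a) :
    (derivative ((binomPoly m).comp (X + C (a : ℚ)))).eval (N : ℚ)
      = (N + a).choose m * (harmonicQ (N + a) - harmonicQ (N + a - m)) := by
  rw [derivative_comp, derivative_X_add_C, one_mul, eval_comp, eval_add, eval_X, eval_C,
    ← Nat.cast_add, eval_natCast_derivative_binomPoly h]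

theorem stmt6 (n : ℕ) :
    ∑ k ∈ range (n + 1), (n.choose k : ℚ) ^ 2 * ((2 * n + k).choose k : ℚ) * (harmonicQ k - harmonicQ (n - k))
      = ((2 * n).choose n : ℚ) ^ 2 * (harmonicQ (2 * n) - harmonicQ n) := by
  have h := congrArg (fun p => (derivative p).eval (n : ℚ))
    (sum_binomPoly_mul_binomPoly_comp_eq (show n ≤ 2 * n by omega))
  simp only [derivative_sum, eval_finsetSum, derivative_C_mul, eval_mul, eval_C] at h
  rw [eval_natCast_derivative_binomPoly_comp_X_add_C (by omega), ← two_mul,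
    show 2 * n - n = n by omega, ← mul_assoc, ← sq] at h
  rw [← h]
  refine sum_congr rfl fun k hk => ?_
  have hk : k ≤ n := mem_range_succ_iff.1 hk
  rw [eval_natCast_derivative_binomPoly_mul_binomPoly_comp hk (by omega) (by omega),
    show 2 * n - n = n by omega, Nat.choose_symm hk, Nat.sub_sub_self hk]
  ring
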